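/- Each of the following subsets of ℝ² is forward-invariant for the ODE system (instA2): the half-planes {a2 > 0} and {a2 < 0}, the set R∞ := {(a0,a2) : a0 < −1, a2 > 1}, and the set R0 := {(a0,a2) : −1 < a0 < 1, 0 < a2 < 1}. That is, any C¹ solution (a0, a2) on [t1, t2] ⊂ (0,∞) whose value at t1 lies in one of these sets remains in that set for all t ∈ [t1, t2]. -/

import Mathlib

open Set

/-- A solution of the ODE system (instA2), with `μ² = u1² − u0²`:
`a0' = −(4λ/μ²)(a2²(u1 − u0) + a0·u1 + u0)`, `a2' = −(3/(2λ))·a2·(a0 + 1)`. -/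
def IsSolInstA2 (u0 : ℝ) (lam u1 a0 a2 : ℝ → ℝ) (s : Set ℝ) : Prop :=
  ∀ t ∈ s,
    HasDerivAt a0 (-(4 * lam t / (u1 t ^ 2 - u0 ^ 2)) *
      (a2 t ^ 2 * (u1 t - u0) + a0 t * u1 t + u0)) t ∧
    HasDerivAt a2 (-(3 / (2 * lam t)) * a2 t * (a0 t + 1)) t

/-- If `h t < h τ` for all `t` in a left neighborhood `[c, τ)` of `τ` and `h` has derivative
`d` at `τ`, then `0 ≤ d`. -/
lemma deriv_nonneg_of_lt_left {h : ℝ → ℝ} {d τ c : ℝ} (hc : c < τ)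
    (hd : HasDerivAt h d τ) (hlt : ∀ t ∈ Ico c τ, h t < h τ) : 0 ≤ d := by
  have hslope : Filter.Tendsto (slope h τ) (nhdsWithin τ (Iio τ)) (nhds d) :=
    (hasDerivAt_iff_tendsto_slope.mp hd).mono_left
      (nhdsWithin_mono _ fun x hx => ne_of_lt hx)
  refine ge_of_tendsto hslope ?_
  filter_upwards [Ioo_mem_nhdsLT_of_mem (⟨hc, le_refl τ⟩ : τ ∈ Ioc c τ)] with t ht
  have h1 : h t - h τ < 0 := sub_neg.mpr (hlt t ⟨ht.1.le, ht.2⟩)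
  have h2 : t - τ < 0 := sub_neg.mpr ht.2
  rw [slope_def_field]
  exact le_of_lt (div_pos_of_neg_of_neg h1 h2)

/-- If `h t > h τ` for all `t` in a left neighborhood `[c, τ)` of `τ` and `h` has derivative
`d` at `τ`, then `d ≤ 0`. -/
lemma deriv_nonpos_of_gt_left {h : ℝ → ℝ} {d τ c : ℝ} (hc : c < τ)
    (hd : HasDerivAt h d τ) (hgt : ∀ t ∈ Ico c τ, h τ < h t) : d ≤ 0 := by
  have := deriv_nonneg_of_lt_left (h := fun t => -h t) hc hd.neg
    (fun t ht => neg_lt_neg (hgt t ht))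
  linarith

set_option maxHeartbeats 1000000 in
/-- The half-planes `{a2 > 0}` and `{a2 < 0}`, the set `R∞ = {a0 < −1, a2 > 1}` and the
set `R0 = {−1 < a0 < 1, 0 < a2 < 1}` are forward-invariant for the ODE system (instA2).
Here `u0` is a constant, `λ` is continuous and strictly positive on `(0,∞)`, and `u1` is
continuously differentiable with `u1' = 2λ` and `u1 > |u0|` on `(0,∞)`. -/
theorem forward_invariant_instA2 (u0 : ℝ) (lam u1 : ℝ → ℝ)
    (hlamc : ContinuousOn lam (Ioi 0))
    (hlam : ∀ t ∈ Ioi (0 : ℝ), 0 < lam t)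
    (hu1' : ∀ t ∈ Ioi (0 : ℝ), HasDerivAt u1 (2 * lam t) t)
    (hu1 : ∀ t ∈ Ioi (0 : ℝ), |u0| < u1 t)
    (a0 a2 : ℝ → ℝ) (t1 t2 : ℝ) (ht1 : 0 < t1) (ht12 : t1 ≤ t2)
    (hsol : IsSolInstA2 u0 lam u1 a0 a2 (Icc t1 t2)) :
    ((0 < a2 t1) → ∀ t ∈ Icc t1 t2, 0 < a2 t) ∧
    ((a2 t1 < 0) → ∀ t ∈ Icc t1 t2, a2 t < 0) ∧
    ((a0 t1 < -1 ∧ 1 < a2 t1) → ∀ t ∈ Icc t1 t2, a0 t < -1 ∧ 1 < a2 t) ∧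
    ((-1 < a0 t1 ∧ a0 t1 < 1 ∧ 0 < a2 t1 ∧ a2 t1 < 1) →
      ∀ t ∈ Icc t1 t2, -1 < a0 t ∧ a0 t < 1 ∧ 0 < a2 t ∧ a2 t < 1) := by
  have hsub : Icc t1 t2 ⊆ Ioi 0 := fun t ht => lt_of_lt_of_le ht1 ht.1
  have hlampos : ∀ t ∈ Icc t1 t2, 0 < lam t := fun t ht => hlam t (hsub ht)
  have ht1mem : t1 ∈ Icc t1 t2 := ⟨le_refl t1, ht12⟩
  -- basic inequalities coming from |u0| < u1
  have hu1sub : ∀ t ∈ Icc t1 t2, 0 < u1 t - u0 := by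
    intro t ht
    have h := hu1 t (hsub ht)
    have h2 := le_abs_self u0
    linarith
  have hu1add : ∀ t ∈ Icc t1 t2, 0 < u1 t + u0 := by
    intro t ht
    have h := hu1 t (hsub ht)
    have h2 := neg_abs_le u0
    linarith
  have hmu : ∀ t ∈ Icc t1 t2, 0 < u1 t ^ 2 - u0 ^ 2 := by
    intro t ht
    have h1 := hu1sub t ht
    have h2 := hu1add t ht
    nlinarith
  -- continuity of the solution
  have hc0 : ∀ t ∈ Icc t1 t2, ContinuousAt a0 t := fun t ht => (hsol t ht).1.continuousAt
  have hc2 : ∀ t ∈ Icc t1 t2, ContinuousAt a2 t := fun t ht => (hsol t ht).2.continuousAt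
  have hc0' : ContinuousOn a0 (Icc t1 t2) := fun t ht => (hc0 t ht).continuousWithinAt
  have hc2' : ContinuousOn a2 (Icc t1 t2) := fun t ht => (hc2 t ht).continuousWithinAt
  -- integrating factor for a2: a2 t = a2 t1 * exp (F t)
  set f : ℝ → ℝ := fun t => -(3 / (2 * lam t)) * (a0 t + 1) with hf
  have hfc : ContinuousOn f (Icc t1 t2) := by
    apply ContinuousOn.mul
    · apply ContinuousOn.neg
      exact continuousOn_const.div (continuousOn_const.mul (hlamc.mono hsub))
        (fun t ht => by have := hlampos t ht; positivity)
    · exact hc0'.add continuousOn_const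
  have hfint : ∀ x ∈ Icc t1 t2, IntervalIntegrable f MeasureTheory.volume t1 x := by
    intro x hx
    apply ContinuousOn.intervalIntegrable
    rw [uIcc_of_le hx.1]
    exact hfc.mono (Icc_subset_Icc le_rfl hx.2)
  set F : ℝ → ℝ := fun x => ∫ s in t1..x, f s with hFdef
  have hFcont : ContinuousOn F (Icc t1 t2) := by
    have : MeasureTheory.IntegrableOn f (uIcc t1 t2) MeasureTheory.volume := by
      rw [uIcc_of_le ht12]; exact hfc.integrableOn_Icc
    have := intervalIntegral.continuousOn_primitive_interval this
    rwa [uIcc_of_le ht12] at this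
  have hFderiv : ∀ x ∈ Ico t1 t2, HasDerivWithinAt F (f x) (Ici x) x := by
    intro x hx
    have hIccmem : Icc t1 t2 ∈ nhdsWithin x (Ioi x) := by
      apply Filter.mem_of_superset (Ioo_mem_nhdsGT_of_mem ⟨le_refl x, hx.2⟩)
      exact fun s hs => ⟨hx.1.trans hs.1.le, hs.2.le⟩
    exact intervalIntegral.integral_hasDerivWithinAt_right (hfint x ⟨hx.1, hx.2.le⟩)
      ⟨Icc t1 t2, hIccmem, hfc.aestronglyMeasurable measurableSet_Icc⟩
      (((hfc x ⟨hx.1, hx.2.le⟩)).mono_of_mem_nhdsWithin hIccmem)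
  set g : ℝ → ℝ := fun x => a2 x * Real.exp (-F x) with hg
  have hgconst : ∀ x ∈ Icc t1 t2, g x = g t1 := by
    apply constant_of_has_deriv_right_zero
    · exact hc2'.mul ((Real.continuous_exp.comp_continuousOn hFcont.neg))
    · intro x hx
      have h2 := (hsol x ⟨hx.1, hx.2.le⟩).2
      have hd : HasDerivWithinAt g
          (-(3 / (2 * lam x)) * a2 x * (a0 x + 1) * Real.exp (-F x)
            + a2 x * (Real.exp (-F x) * (-(f x)))) (Ici x) x :=
        (h2.hasDerivWithinAt).mul ((hFderiv x hx).neg.exp)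
      refine hd.congr_deriv ?_
      simp only [hf]
      ring
  have hrepr : ∀ t ∈ Icc t1 t2, a2 t = a2 t1 * Real.exp (F t) := by
    intro t ht
    have h1 := hgconst t ht
    have hF1 : F t1 = 0 := intervalIntegral.integral_same
    simp only [hg, hF1, neg_zero, Real.exp_zero, mul_one] at h1
    have he : Real.exp (F t) ≠ 0 := Real.exp_ne_zero _
    rw [Real.exp_neg] at h1
    field_simp at h1
    linarith
  have part1 : (0 < a2 t1) → ∀ t ∈ Icc t1 t2, 0 < a2 t := by
    intro h t ht
    rw [hrepr t ht]
    exact mul_pos h (Real.exp_pos _)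
  have part2 : (a2 t1 < 0) → ∀ t ∈ Icc t1 t2, a2 t < 0 := by
    intro h t ht
    rw [hrepr t ht]
    exact mul_neg_of_neg_of_pos h (Real.exp_pos _)
  refine ⟨part1, part2, ?_, ?_⟩
  -- R∞ = {a0 < -1, 1 < a2}
  · rintro ⟨h0, h2⟩
    by_contra hcon
    push_neg at hcon
    set S : Set ℝ := {t | t ∈ Icc t1 t2 ∧ ¬(a0 t < -1 ∧ 1 < a2 t)} with hS
    have hSne : S.Nonempty := by
      obtain ⟨t, ht, hP⟩ := hcon
      exact ⟨t, ht, fun hc => absurd (hP hc.1) (not_le.mpr hc.2)⟩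
    have hSbdd : BddBelow S := ⟨t1, fun s hs => hs.1.1⟩
    set τ : ℝ := sInf S with hτ
    have hSne' := hSne
    obtain ⟨s0, hs0⟩ := hSne'
    have hτmem : τ ∈ Icc t1 t2 :=
      ⟨le_csInf hSne fun s hs => hs.1.1, (csInf_le hSbdd hs0).trans hs0.1.2⟩
    have hτS : τ ∈ S := by
      by_contra hmem
      have hR : a0 τ < -1 ∧ 1 < a2 τ := by
        by_contra h; exact hmem ⟨hτmem, h⟩
      have hev : ∀ᶠ t in nhds τ, a0 t < -1 ∧ 1 < a2 t := by
        have e1 : ∀ᶠ t in nhds τ, a0 t < -1 :=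
          (hc0 τ hτmem).preimage_mem_nhds (Iio_mem_nhds hR.1)
        have e2 : ∀ᶠ t in nhds τ, 1 < a2 t :=
          (hc2 τ hτmem).preimage_mem_nhds (Ioi_mem_nhds hR.2)
        exact e1.and e2
      rw [Metric.eventually_nhds_iff] at hev
      obtain ⟨ε, hε, hball⟩ := hev
      obtain ⟨s, hsS, hslt⟩ := exists_lt_of_csInf_lt hSne (by linarith : sInf S < τ + ε)
      have hτs : τ ≤ s := csInf_le hSbdd hsS
      have : dist s τ < ε := by
        rw [Real.dist_eq, abs_of_nonneg (by linarith)]; linarith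
      exact hsS.2 (hball this)
    have ht1τ : t1 < τ := by
      rcases lt_or_eq_of_le hτmem.1 with h | h
      · exact h
      · exact absurd ⟨h0, h2⟩ (h ▸ hτS.2)
    have hin : ∀ t ∈ Ico t1 τ, a0 t < -1 ∧ 1 < a2 t := by
      intro t ht
      by_contra h
      have : t ∈ S := ⟨⟨ht.1, ht.2.le.trans hτmem.2⟩, h⟩
      exact absurd (csInf_le hSbdd this) (not_le.mpr ht.2)
    have hIccτ : Icc t1 τ ⊆ Icc t1 t2 := Icc_subset_Icc le_rfl hτmem.2
    -- a2 is strictly increasing on [t1, τ]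
    have hmono : StrictMonoOn a2 (Icc t1 τ) := by
      apply strictMonoOn_of_deriv_pos (convex_Icc t1 τ) (hc2'.mono hIccτ)
      intro x hx
      rw [interior_Icc] at hx
      have hxI : x ∈ Icc t1 t2 := hIccτ ⟨hx.1.le, hx.2.le⟩
      rw [(hsol x hxI).2.deriv]
      have hl := hlampos x hxI
      have hx2 := (hin x ⟨hx.1.le, hx.2⟩).2
      have hx0 := (hin x ⟨hx.1.le, hx.2⟩).1
      have hpp : 0 < 3 / (2 * lam x) := by positivity
      nlinarith [mul_pos (mul_pos hpp (lt_trans zero_lt_one hx2))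
        (show (0:ℝ) < -(a0 x + 1) by linarith)]
    have ha2τ : 1 < a2 τ :=
      h2.trans (hmono ⟨le_refl t1, ht1τ.le⟩ ⟨ht1τ.le, le_refl τ⟩ ht1τ)
    have ha0τle : a0 τ ≤ -1 := by
      have htend : Filter.Tendsto a0 (nhdsWithin τ (Iio τ)) (nhds (a0 τ)) :=
        (hc0 τ hτmem).tendsto.mono_left nhdsWithin_le_nhds
      refine le_of_tendsto htend ?_
      filter_upwards [Ioo_mem_nhdsLT_of_mem (⟨ht1τ, le_refl τ⟩ : τ ∈ Ioc t1 τ)] with t ht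
      exact (hin t ⟨ht.1.le, ht.2⟩).1.le
    have ha0τ : a0 τ = -1 := by
      rcases lt_or_eq_of_le ha0τle with h | h
      · exact absurd ⟨h, ha2τ⟩ hτS.2
      · exact h
    -- derivative of a0 at τ is negative, contradiction
    have hd0 := (hsol τ hτmem).1
    have hdneg : -(4 * lam τ / (u1 τ ^ 2 - u0 ^ 2)) *
        (a2 τ ^ 2 * (u1 τ - u0) + a0 τ * u1 τ + u0) < 0 := by
      have h1 := hmu τ hτmem
      have h2' := hu1sub τ hτmem
      have h3 := hlampos τ hτmem
      rw [ha0τ]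
      have hnum : 0 < a2 τ ^ 2 * (u1 τ - u0) + (-1) * u1 τ + u0 := by
        nlinarith [mul_pos (show (0:ℝ) < a2 τ ^ 2 - 1 by nlinarith) h2']
      have hcoef : 0 < 4 * lam τ / (u1 τ ^ 2 - u0 ^ 2) := by positivity
      linarith [mul_pos hcoef hnum]
    have := deriv_nonneg_of_lt_left ht1τ hd0
      (fun t ht => by rw [ha0τ]; exact (hin t ht).1)
    linarith
  -- R0 = {-1 < a0 < 1, 0 < a2 < 1}
  · rintro ⟨h0l, h0r, h2l, h2r⟩
    have hpos := part1 h2l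
    by_contra hcon
    push_neg at hcon
    set S : Set ℝ := {t | t ∈ Icc t1 t2 ∧
      ¬(-1 < a0 t ∧ a0 t < 1 ∧ 0 < a2 t ∧ a2 t < 1)} with hS
    have hSne : S.Nonempty := by
      obtain ⟨t, ht, hP⟩ := hcon
      refine ⟨t, ht, fun hc => ?_⟩
      obtain ⟨c1, c2, c3, c4⟩ := hc
      exact absurd (hP c1 c2 c3) (not_le.mpr c4)
    have hSbdd : BddBelow S := ⟨t1, fun s hs => hs.1.1⟩
    set τ : ℝ := sInf S with hτ
    have hSne' := hSne
    obtain ⟨s0, hs0⟩ := hSne'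
    have hτmem : τ ∈ Icc t1 t2 :=
      ⟨le_csInf hSne fun s hs => hs.1.1, (csInf_le hSbdd hs0).trans hs0.1.2⟩
    have hτS : τ ∈ S := by
      by_contra hmem
      have hR : -1 < a0 τ ∧ a0 τ < 1 ∧ 0 < a2 τ ∧ a2 τ < 1 := by
        by_contra h; exact hmem ⟨hτmem, h⟩
      have hev : ∀ᶠ t in nhds τ, -1 < a0 t ∧ a0 t < 1 ∧ 0 < a2 t ∧ a2 t < 1 := by
        have e1 : ∀ᶠ t in nhds τ, -1 < a0 t :=
          (hc0 τ hτmem).preimage_mem_nhds (Ioi_mem_nhds hR.1)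
        have e2 : ∀ᶠ t in nhds τ, a0 t < 1 :=
          (hc0 τ hτmem).preimage_mem_nhds (Iio_mem_nhds hR.2.1)
        have e3 : ∀ᶠ t in nhds τ, 0 < a2 t :=
          (hc2 τ hτmem).preimage_mem_nhds (Ioi_mem_nhds hR.2.2.1)
        have e4 : ∀ᶠ t in nhds τ, a2 t < 1 :=
          (hc2 τ hτmem).preimage_mem_nhds (Iio_mem_nhds hR.2.2.2)
        exact e1.and (e2.and (e3.and e4))
      rw [Metric.eventually_nhds_iff] at hev
      obtain ⟨ε, hε, hball⟩ := hev
      obtain ⟨s, hsS, hslt⟩ := exists_lt_of_csInf_lt hSne (by linarith : sInf S < τ + ε)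
      have hτs : τ ≤ s := csInf_le hSbdd hsS
      have : dist s τ < ε := by
        rw [Real.dist_eq, abs_of_nonneg (by linarith)]; linarith
      exact hsS.2 (hball this)
    have ht1τ : t1 < τ := by
      rcases lt_or_eq_of_le hτmem.1 with h | h
      · exact h
      · exact absurd ⟨h0l, h0r, h2l, h2r⟩ (h ▸ hτS.2)
    have hin : ∀ t ∈ Ico t1 τ, -1 < a0 t ∧ a0 t < 1 ∧ 0 < a2 t ∧ a2 t < 1 := by
      intro t ht
      by_contra h
      have : t ∈ S := ⟨⟨ht.1, ht.2.le.trans hτmem.2⟩, h⟩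
      exact absurd (csInf_le hSbdd this) (not_le.mpr ht.2)
    have hIccτ : Icc t1 τ ⊆ Icc t1 t2 := Icc_subset_Icc le_rfl hτmem.2
    -- a2 is strictly decreasing on [t1, τ]
    have hanti : StrictAntiOn a2 (Icc t1 τ) := by
      apply strictAntiOn_of_deriv_neg (convex_Icc t1 τ) (hc2'.mono hIccτ)
      intro x hx
      rw [interior_Icc] at hx
      have hxI : x ∈ Icc t1 t2 := hIccτ ⟨hx.1.le, hx.2.le⟩
      rw [(hsol x hxI).2.deriv]
      have hl := hlampos x hxI
      obtain ⟨hx1, hx2, hx3, hx4⟩ := hin x ⟨hx.1.le, hx.2⟩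
      have hpp : 0 < 3 / (2 * lam x) := by positivity
      nlinarith [mul_pos (mul_pos hpp hx3) (show (0:ℝ) < a0 x + 1 by linarith)]
    have ha2τlt : a2 τ < 1 :=
      (hanti ⟨le_refl t1, ht1τ.le⟩ ⟨ht1τ.le, le_refl τ⟩ ht1τ).trans h2r
    have ha2τpos : 0 < a2 τ := hpos τ hτmem
    have htend0 : Filter.Tendsto a0 (nhdsWithin τ (Iio τ)) (nhds (a0 τ)) :=
      (hc0 τ hτmem).tendsto.mono_left nhdsWithin_le_nhds
    have ha0ge : -1 ≤ a0 τ := by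
      refine ge_of_tendsto htend0 ?_
      filter_upwards [Ioo_mem_nhdsLT_of_mem (⟨ht1τ, le_refl τ⟩ : τ ∈ Ioc t1 τ)] with t ht
      exact (hin t ⟨ht.1.le, ht.2⟩).1.le
    have ha0le : a0 τ ≤ 1 := by
      refine le_of_tendsto htend0 ?_
      filter_upwards [Ioo_mem_nhdsLT_of_mem (⟨ht1τ, le_refl τ⟩ : τ ∈ Ioc t1 τ)] with t ht
      exact (hin t ⟨ht.1.le, ht.2⟩).2.1.le
    have hd0 := (hsol τ hτmem).1
    have h1 := hmu τ hτmem
    have h2' := hu1sub τ hτmem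
    have h2'' := hu1add τ hτmem
    have h3 := hlampos τ hτmem
    have hcoef : 0 < 4 * lam τ / (u1 τ ^ 2 - u0 ^ 2) := by positivity
    have hcase : a0 τ = -1 ∨ a0 τ = 1 := by
      rcases lt_or_eq_of_le ha0ge with hg | hg
      · rcases lt_or_eq_of_le ha0le with hl' | hl'
        · exact absurd ⟨hg, hl', ha2τpos, ha2τlt⟩ hτS.2
        · exact Or.inr hl'
      · exact Or.inl hg.symm
    rcases hcase with hEq | hEq
    · -- a0 τ = -1, derivative is positive, but a0 decreases to -1: contradiction
      have hdpos : 0 < -(4 * lam τ / (u1 τ ^ 2 - u0 ^ 2)) *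
          (a2 τ ^ 2 * (u1 τ - u0) + a0 τ * u1 τ + u0) := by
        rw [hEq]
        have hnum : a2 τ ^ 2 * (u1 τ - u0) + (-1) * u1 τ + u0 < 0 := by
          nlinarith [mul_pos (show (0:ℝ) < 1 - a2 τ ^ 2 by nlinarith) h2']
        linarith [mul_pos hcoef (neg_pos.mpr hnum)]
      have := deriv_nonpos_of_gt_left ht1τ hd0
        (fun t ht => by rw [hEq]; exact (hin t ht).1)
      linarith
    · -- a0 τ = 1, derivative is negative, but a0 increases to 1: contradiction
      have hdneg : -(4 * lam τ / (u1 τ ^ 2 - u0 ^ 2)) *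
          (a2 τ ^ 2 * (u1 τ - u0) + a0 τ * u1 τ + u0) < 0 := by
        rw [hEq]
        have hnum : 0 < a2 τ ^ 2 * (u1 τ - u0) + 1 * u1 τ + u0 := by
          nlinarith [mul_nonneg (sq_nonneg (a2 τ)) h2'.le]
        linarith [mul_pos hcoef hnum]
      have := deriv_nonneg_of_lt_left ht1τ hd0
        (fun t ht => by rw [hEq]; exact (hin t ht).2.1)
      linarith
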